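/- If P is a real-linear endomorphism of a complex normed space (V, J) with J an isometric complex structure, and ‖P - id‖ < 1/2 in operator norm, then the complex-linear part P^J = (1/2)(P - J ∘ P ∘ J) of P is a linear isomorphism. -/

import Mathlib

/-!
Write `Pᴶ = ½(P - JPJ)`. Since `J² = -1`, the identity is its own complex-linear part, so
`Pᴶ - 1 = (P - 1)ᴶ`; and since `J` is an isometry, taking the complex-linear part does not
increase the operator norm. Hence `‖Pᴶ - 1‖ ≤ ‖P - 1‖ < 1`, and `Pᴶ` is invertible by the
Neumann series.
-/

namespace ContinuousLinearMap

variable {V : Type*} [NormedAddCommGroup V] [NormedSpace ℝ V]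

noncomputable def complexLinearPart (J P : V →L[ℝ] V) : V →L[ℝ] V :=
  (1 / 2 : ℝ) • (P - J.comp (P.comp J))

theorem complexLinearPart_sub (J P Q : V →L[ℝ] V) :
    complexLinearPart J (P - Q) = complexLinearPart J P - complexLinearPart J Q := by
  simp only [complexLinearPart, sub_comp, comp_sub, ← smul_sub]
  abel_nf

theorem complexLinearPart_one {J : V →L[ℝ] V} (hJ2 : J.comp J = -ContinuousLinearMap.id ℝ V) :
    complexLinearPart J 1 = 1 := by
  rw [complexLinearPart, one_def, id_comp, hJ2, sub_neg_eq_add, ← two_smul ℝ, smul_smul]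
  norm_num

theorem norm_complexLinearPart_le {J : V →L[ℝ] V} (hJ : ‖J‖ ≤ 1) (P : V →L[ℝ] V) :
    ‖complexLinearPart J P‖ ≤ ‖P‖ := by
  have hJPJ : ‖J.comp (P.comp J)‖ ≤ ‖P‖ :=
    calc ‖J.comp (P.comp J)‖ ≤ ‖J‖ * (‖P‖ * ‖J‖) :=
          (opNorm_comp_le _ _).trans
            (mul_le_mul_of_nonneg_left (opNorm_comp_le _ _) (norm_nonneg _))
      _ ≤ 1 * (‖P‖ * 1) := by gcongr
      _ = ‖P‖ := by ring
  calc ‖complexLinearPart J P‖ ≤ ‖(1 / 2 : ℝ)‖ * (‖P‖ + ‖J.comp (P.comp J)‖) :=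
        (norm_smul_le _ _).trans (mul_le_mul_of_nonneg_left (norm_sub_le _ _) (norm_nonneg _))
    _ ≤ 1 / 2 * (‖P‖ + ‖P‖) := by rw [Real.norm_of_nonneg (by norm_num)]; gcongr
    _ = ‖P‖ := by ring

theorem exists_continuousLinearEquiv_of_norm_sub_one_lt [CompleteSpace V] {T : V →L[ℝ] V}
    (hT : ‖T - 1‖ < 1) : ∃ e : V ≃L[ℝ] V, (e : V →L[ℝ] V) = T :=
  ⟨ContinuousLinearEquiv.ofUnit (Units.oneSub (1 - T) (by rwa [norm_sub_rev])), by
    ext v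
    simp [ContinuousLinearEquiv.ofUnit]⟩

end ContinuousLinearMap

/-- If `P` is a bounded real-linear endomorphism of a complex Banach space `(V, J)` with `J`
an isometric complex structure and `‖P - id‖ < 1/2`, then the complex-linear part
`Pᴶ = (1/2)(P - J ∘ P ∘ J)` of `P` is a (continuous linear) isomorphism. -/
theorem stmt_1 (V : Type*) [NormedAddCommGroup V] [NormedSpace ℝ V] [CompleteSpace V]
    (J P : V →L[ℝ] V)
    (hJ2 : J.comp J = -ContinuousLinearMap.id ℝ V)
    (hJiso : ∀ v : V, ‖J v‖ = ‖v‖)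
    (hP : ‖P - ContinuousLinearMap.id ℝ V‖ < 1 / 2) :
    ∃ e : V ≃L[ℝ] V, (e : V →L[ℝ] V) = (1 / 2 : ℝ) • (P - J.comp (P.comp J)) := by
  have hJ : ‖J‖ ≤ 1 := J.opNorm_le_bound zero_le_one fun v => by rw [hJiso, one_mul]
  have hclose : ‖J.complexLinearPart P - 1‖ < 1 :=
    calc ‖J.complexLinearPart P - 1‖ = ‖J.complexLinearPart (P - 1)‖ := by
          rw [J.complexLinearPart_sub, ContinuousLinearMap.complexLinearPart_one hJ2]
      _ ≤ ‖P - 1‖ := ContinuousLinearMap.norm_complexLinearPart_le hJ _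
      _ < 1 := by rw [ContinuousLinearMap.one_def]; linarith
  exact ContinuousLinearMap.exists_continuousLinearEquiv_of_norm_sub_one_lt hclose
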